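/- arXiv:2205.05366 — 2 statements merged into one kernel-verified Lean document; each statement's English description precedes it below -/
import Mathlib

section
/- Let v ∈ ℂ and P₀ a real symmetric 2ν×2ν matrix such that [I_ν; vI_ν]* P₀ [I_ν; vI_ν] is positive semidefinite. Let M be a positive semidefinite Hermitian (νk)×(νk) matrix. Define P(P₀, M) := (I₂ ⊗ vec(I_ν) ⊗ I_k)ᵀ (P₀ ⊗ M) (I₂ ⊗ vec(I_ν) ⊗ I_k). Then [I_k; vI_k]* P(P₀, M) [I_k; vI_k] is positive semidefinite. -/
open Matrix Kronecker Complex ComplexOrder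

/-- The vectorization of the `ν×ν` identity matrix, as a `ν²×1` complex matrix. -/
def vecIdent (ν : ℕ) : Matrix (Fin ν × Fin ν) (Fin 1) ℂ :=
  fun p _ => if p.1 = p.2 then 1 else 0

/-! With `E_m` the reindexed `I_m ⊗ vec(I_ν) ⊗ I_k` and `B = [1; v] ⊗ I_ν`, one has
`E_2 ([1; v] ⊗ I_k) = (B ⊗ I_{νk}) E_1`. So the matrix in question is the congruence
`E_1* ((B* P₀ B) ⊗ M) E_1`, and a Kronecker product of positive semidefinite matrices is
positive semidefinite. -/

def kronVecIdent (m : Type*) (ν : ℕ) (κ : Type*) [DecidableEq m] [DecidableEq κ] :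
    Matrix ((m × Fin ν) × (Fin ν × κ)) (m × κ) ℂ :=
  (((1 : Matrix m m ℂ) ⊗ₖ vecIdent ν) ⊗ₖ (1 : Matrix κ κ ℂ)).submatrix
    (fun p => ((p.1.1, (p.1.2, p.2.1)), p.2.2)) (fun q => ((q.1, 0), q.2))

lemma kronVecIdent_apply {m κ : Type*} [DecidableEq m] [DecidableEq κ] {ν : ℕ}
    (a : m) (i j : Fin ν) (f : κ) (b : m) (g : κ) :
    kronVecIdent m ν κ ((a, i), (j, f)) (b, g) = if a = b ∧ i = j ∧ f = g then 1 else 0 := by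
  simp only [kronVecIdent, vecIdent, submatrix_apply, kroneckerMap_apply, one_apply]
  split_ifs <;> simp_all

section

variable {m l κ : Type*} [Fintype m] [Fintype l] [Fintype κ]
  [DecidableEq m] [DecidableEq l] [DecidableEq κ] {ν : ℕ}

lemma kronVecIdent_mul_kronecker_one (c : Matrix m l ℂ) :
    kronVecIdent m ν κ * (c ⊗ₖ (1 : Matrix κ κ ℂ)) =
      ((c ⊗ₖ (1 : Matrix (Fin ν) (Fin ν) ℂ)) ⊗ₖ (1 : Matrix (Fin ν × κ) (Fin ν × κ) ℂ)) *
        kronVecIdent l ν κ := by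
  ext ⟨⟨a, i⟩, ⟨j, f⟩⟩ ⟨b, g⟩
  simp [mul_apply, kronVecIdent_apply, Fintype.sum_prod_type, one_apply, ite_and]

theorem posSemidef_kronVecIdent_congr {c : Matrix m l ℂ} {P : Matrix (m × Fin ν) (m × Fin ν) ℂ}
    (hP : ((c ⊗ₖ (1 : Matrix (Fin ν) (Fin ν) ℂ))ᴴ * P *
      (c ⊗ₖ (1 : Matrix (Fin ν) (Fin ν) ℂ))).PosSemidef)
    {M : Matrix (Fin ν × κ) (Fin ν × κ) ℂ} (hM : M.PosSemidef) :
    ((c ⊗ₖ (1 : Matrix κ κ ℂ))ᴴ * ((kronVecIdent m ν κ)ᴴ * (P ⊗ₖ M) * kronVecIdent m ν κ) *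
      (c ⊗ₖ (1 : Matrix κ κ ℂ))).PosSemidef := by
  set E := kronVecIdent m ν κ
  set F := kronVecIdent l ν κ
  set B : Matrix (m × Fin ν) (l × Fin ν) ℂ := c ⊗ₖ 1
  set C : Matrix (m × κ) (l × κ) ℂ := c ⊗ₖ 1
  set I : Matrix (Fin ν × κ) (Fin ν × κ) ℂ := 1
  have hEF : E * C = (B ⊗ₖ I) * F := kronVecIdent_mul_kronecker_one c
  have h : Cᴴ * (Eᴴ * (P ⊗ₖ M) * E) * C = Fᴴ * ((Bᴴ * P * B) ⊗ₖ M) * F := by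
    calc _ = (E * C)ᴴ * (P ⊗ₖ M) * (E * C) := by
          simp only [conjTranspose_mul, Matrix.mul_assoc]
      _ = Fᴴ * ((Bᴴ ⊗ₖ Iᴴ) * (P ⊗ₖ M) * (B ⊗ₖ I)) * F := by
          simp only [hEF, conjTranspose_mul, conjTranspose_kronecker, Matrix.mul_assoc]
      _ = _ := by
          simp only [← mul_kronecker_mul, I, conjTranspose_one, Matrix.one_mul, Matrix.mul_one]
  rw [h]
  exact (hP.kronecker hM).conjTranspose_mul_mul_same F

end

theorem stmt7_general (ν k : ℕ) (v : ℂ) (P₀ : Matrix (Fin 2 × Fin ν) (Fin 2 × Fin ν) ℝ)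
    (hv : (((!![(1 : ℂ); v]) ⊗ₖ (1 : Matrix (Fin ν) (Fin ν) ℂ))ᴴ * P₀.map Complex.ofReal *
      ((!![(1 : ℂ); v]) ⊗ₖ (1 : Matrix (Fin ν) (Fin ν) ℂ))).PosSemidef)
    (M : Matrix (Fin ν × Fin k) (Fin ν × Fin k) ℂ) (hM : M.PosSemidef) :
    ((((!![(1 : ℂ); v]) ⊗ₖ (1 : Matrix (Fin k) (Fin k) ℂ)))ᴴ *
      (((((1 : Matrix (Fin 2) (Fin 2) ℂ) ⊗ₖ vecIdent ν) ⊗ₖ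
            (1 : Matrix (Fin k) (Fin k) ℂ)).submatrix
          (fun p : (Fin 2 × Fin ν) × (Fin ν × Fin k) => ((p.1.1, (p.1.2, p.2.1)), p.2.2))
          (fun q : Fin 2 × Fin k => ((q.1, (0 : Fin 1)), q.2)))ᴴ *
        ((P₀.map Complex.ofReal) ⊗ₖ M) *
        ((((1 : Matrix (Fin 2) (Fin 2) ℂ) ⊗ₖ vecIdent ν) ⊗ₖ
            (1 : Matrix (Fin k) (Fin k) ℂ)).submatrix
          (fun p : (Fin 2 × Fin ν) × (Fin ν × Fin k) => ((p.1.1, (p.1.2, p.2.1)), p.2.2))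
          (fun q : Fin 2 × Fin k => ((q.1, (0 : Fin 1)), q.2)))) *
      (((!![(1 : ℂ); v]) ⊗ₖ (1 : Matrix (Fin k) (Fin k) ℂ)))).PosSemidef :=
  posSemidef_kronVecIdent_congr hv hM

/-- Let `v ∈ ℂ`, `P₀` real symmetric `2ν×2ν` with
`[I_ν; vI_ν]* P₀ [I_ν; vI_ν]` positive semidefinite, and `M` a positive semidefinite
`(νk)×(νk)` Hermitian matrix. With
`P(P₀, M) := (I₂ ⊗ vec(I_ν) ⊗ I_k)ᵀ (P₀ ⊗ M) (I₂ ⊗ vec(I_ν) ⊗ I_k)` (after the natural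
reindexing of Kronecker index products), `[I_k; vI_k]* P(P₀, M) [I_k; vI_k]` is positive
semidefinite. -/
theorem stmt7 (ν k : ℕ) (v : ℂ) (P₀ : Matrix (Fin 2 × Fin ν) (Fin 2 × Fin ν) ℝ)
    (hP₀ : P₀.IsSymm)
    (hv : (((!![(1 : ℂ); v]) ⊗ₖ (1 : Matrix (Fin ν) (Fin ν) ℂ))ᴴ * P₀.map Complex.ofReal *
      ((!![(1 : ℂ); v]) ⊗ₖ (1 : Matrix (Fin ν) (Fin ν) ℂ))).PosSemidef)
    (M : Matrix (Fin ν × Fin k) (Fin ν × Fin k) ℂ) (hM : M.PosSemidef) :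
    ((((!![(1 : ℂ); v]) ⊗ₖ (1 : Matrix (Fin k) (Fin k) ℂ)))ᴴ *
      (((((1 : Matrix (Fin 2) (Fin 2) ℂ) ⊗ₖ vecIdent ν) ⊗ₖ
            (1 : Matrix (Fin k) (Fin k) ℂ)).submatrix
          (fun p : (Fin 2 × Fin ν) × (Fin ν × Fin k) => ((p.1.1, (p.1.2, p.2.1)), p.2.2))
          (fun q : Fin 2 × Fin k => ((q.1, (0 : Fin 1)), q.2)))ᴴ *
        ((P₀.map Complex.ofReal) ⊗ₖ M) *
        ((((1 : Matrix (Fin 2) (Fin 2) ℂ) ⊗ₖ vecIdent ν) ⊗ₖ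
            (1 : Matrix (Fin k) (Fin k) ℂ)).submatrix
          (fun p : (Fin 2 × Fin ν) × (Fin ν × Fin k) => ((p.1.1, (p.1.2, p.2.1)), p.2.2))
          (fun q : Fin 2 × Fin k => ((q.1, (0 : Fin 1)), q.2)))) *
      (((!![(1 : ℂ); v]) ⊗ₖ (1 : Matrix (Fin k) (Fin k) ℂ)))).PosSemidef :=
  stmt7_general ν k v P₀ hv M hM
end

section
/- Let P₀ be a real symmetric 2×2 matrix, M a real symmetric k×k positive semidefinite matrix, and v ∈ ℂ with [1; v]* P₀ [1; v] ≥ 0. Then with V = vI_k and P = P₀ ⊗ M, the matrix [I_k; V]* P [I_k; V] is positive semidefinite, i.e., the multiplier class {P₀ ⊗ M : M ⪰ 0} satisfies the full-block S-procedure value set condition for the repeated-scalar value set. -/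
/-! By the mixed-product property, `([1; v] ⊗ I)ᴴ (P₀ ⊗ M) ([1; v] ⊗ I)` is the Kronecker product of
the `1 × 1` matrix `[1; v]ᴴ P₀ [1; v]`, which is nonnegative, with `M`; Kronecker products of
positive semidefinite matrices are positive semidefinite. -/

open Matrix Kronecker Complex ComplexOrder

namespace Matrix

theorem conjTranspose_kronecker_one_mul_kronecker_mul {R l m n : Type*} [CommRing R] [StarRing R]
    [Fintype l] [Fintype m] [Fintype n] [DecidableEq n]
    (A : Matrix l m R) (P : Matrix l l R) (M : Matrix n n R) :
    (A ⊗ₖ (1 : Matrix n n R))ᴴ * (P ⊗ₖ M) * (A ⊗ₖ (1 : Matrix n n R)) = (Aᴴ * P * A) ⊗ₖ M := by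
  rw [conjTranspose_kronecker, conjTranspose_one, ← mul_kronecker_mul, ← mul_kronecker_mul,
    one_mul, mul_one]

theorem posSemidef_of_unique {R ι : Type*} [CommRing R] [PartialOrder R] [StarRing R]
    [StarOrderedRing R] [Unique ι] {A : Matrix ι ι R} (h : 0 ≤ A default default) :
    A.PosSemidef := by
  have hA : A = A default default • (1 : Matrix ι ι R) := by
    ext i j
    simp [Subsingleton.elim i default, Subsingleton.elim j default]
  rw [hA]
  exact PosSemidef.one.smul h

theorem PosSemidef.map_ofReal {𝕜 n : Type*} [RCLike 𝕜] [Fintype n] {M : Matrix n n ℝ}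
    (hM : M.PosSemidef) : (M.map ((↑) : ℝ → 𝕜)).PosSemidef := by
  classical
  open scoped MatrixOrder in
  obtain ⟨B, rfl⟩ := CStarAlgebra.nonneg_iff_eq_star_mul_self.mp hM.nonneg
  have hmap : (star B * B).map ((↑) : ℝ → 𝕜) = (B.map (↑))ᴴ * B.map (↑) := by
    rw [star_eq_conjTranspose, Matrix.map_mul (f := algebraMap ℝ 𝕜)]
    exact congrArg (· * _) (conjTranspose_map _ fun _ ↦ (RCLike.conj_ofReal _).symm)
  rw [hmap]
  exact posSemidef_conjTranspose_mul_self _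

end Matrix

theorem stmt19_general (k : ℕ) (P₀ : Matrix (Fin 2) (Fin 2) ℝ)
    (M : Matrix (Fin k) (Fin k) ℝ) (hM : M.PosSemidef) (v : ℂ)
    (hv : 0 ≤ ((!![(1 : ℂ); v])ᴴ * P₀.map Complex.ofReal * !![(1 : ℂ); v]) 0 0) :
    (((!![(1 : ℂ); v]) ⊗ₖ (1 : Matrix (Fin k) (Fin k) ℂ))ᴴ *
      ((P₀.map Complex.ofReal) ⊗ₖ (M.map Complex.ofReal)) *
      ((!![(1 : ℂ); v]) ⊗ₖ (1 : Matrix (Fin k) (Fin k) ℂ))).PosSemidef := by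
  rw [conjTranspose_kronecker_one_mul_kronecker_mul]
  exact (posSemidef_of_unique hv).kronecker (hM.map_ofReal (𝕜 := ℂ))

/-- With `V = vI_k` and `P = P₀ ⊗ M` for `M ⪰ 0` real symmetric and
`[1; v]* P₀ [1; v] ≥ 0`, the matrix `[I_k; V]* P [I_k; V]` is positive semidefinite
(full-block S-procedure value set condition for the repeated-scalar value set). -/
theorem stmt19 (k : ℕ) (P₀ : Matrix (Fin 2) (Fin 2) ℝ) (hP₀ : P₀.IsSymm)
    (M : Matrix (Fin k) (Fin k) ℝ) (hMsymm : M.IsSymm) (hM : M.PosSemidef) (v : ℂ)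
    (hv : 0 ≤ ((!![(1 : ℂ); v])ᴴ * P₀.map Complex.ofReal * !![(1 : ℂ); v]) 0 0) :
    (((!![(1 : ℂ); v]) ⊗ₖ (1 : Matrix (Fin k) (Fin k) ℂ))ᴴ *
      ((P₀.map Complex.ofReal) ⊗ₖ (M.map Complex.ofReal)) *
      ((!![(1 : ℂ); v]) ⊗ₖ (1 : Matrix (Fin k) (Fin k) ℂ))).PosSemidef :=
  stmt19_general k P₀ M hM v hv
end
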